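/- The function i(t,t') determined by a finite multiset B of intervals with endpoints among the critical values determines the multiset B itself: if two such multisets B and B' satisfy i_B(t,t') = i_{B'}(t,t') for all t ≤ t', then B = B'. -/

import Mathlib

open Classical Multiset

noncomputable section

/-- The four kinds of intervals: closed-closed, closed-open, open-closed, open-open. -/
inductive BarKind : Type
  | cc | co | oc | oo
  deriving DecidableEq

/-- A real interval of one of the four types, with endpoints `a ≤ b`. -/
structure Bar : Type where
  kind : BarKind
  a : ℝ
  b : ℝ

instance : DecidableEq Bar := Classical.decEq _

namespace Bar

/-- The underlying set of points of the interval. -/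
def toSet (I : Bar) : Set ℝ :=
  match I.kind with
  | .cc => Set.Icc I.a I.b
  | .co => Set.Ico I.a I.b
  | .oc => Set.Ioc I.a I.b
  | .oo => Set.Ioo I.a I.b

/-- Nonemptiness condition: `a ≤ b` for closed intervals, `a < b` otherwise. -/
def Valid (I : Bar) : Prop :=
  match I.kind with
  | .cc => I.a ≤ I.b
  | _ => I.a < I.b

def rightOpen (I : Bar) : Prop := I.kind = .co ∨ I.kind = .oo
def leftOpen (I : Bar) : Prop := I.kind = .oc ∨ I.kind = .oo
def leftClosed (I : Bar) : Prop := I.kind = .cc ∨ I.kind = .co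

end Bar

/-- `i(t,t')`: the number of intervals of `B` containing `[t,t']`. -/
def icount (B : Multiset Bar) (t t' : ℝ) : ℕ :=
  countP (fun I => Set.Icc t t' ⊆ I.toSet) B

/-- `l(t)`: the number of intervals of `B` containing `t`. -/
def lcount (B : Multiset Bar) (t : ℝ) : ℕ :=
  countP (fun I => t ∈ I.toSet) B

/-- `l⁺(t;t')`: intervals of `B` containing `t` with open right endpoint `≤ t'`. -/
def lplus (B : Multiset Bar) (t t' : ℝ) : ℕ :=
  countP (fun I => t ∈ I.toSet ∧ I.rightOpen ∧ I.b ≤ t') B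

/-- `l⁻(t;t'')`: intervals of `B` containing `t` with open left endpoint `≥ t''`. -/
def lminus (B : Multiset Bar) (t t'' : ℝ) : ℕ :=
  countP (fun I => t ∈ I.toSet ∧ I.leftOpen ∧ t'' ≤ I.a) B

/-- `e(t;t',t'')`: open intervals `(a,b)` of `B` with `t'' ≤ a < t < b ≤ t'`. -/
def ecount (B : Multiset Bar) (t t' t'' : ℝ) : ℕ :=
  countP (fun I => I.kind = .oo ∧ t'' ≤ I.a ∧ I.a < t ∧ t < I.b ∧ I.b ≤ t') B

/-- All endpoints of intervals of `B` lie among the critical values `t 0, …, t N`. -/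
def endpointsIn (B : Multiset Bar) (t : ℕ → ℝ) (N : ℕ) : Prop :=
  ∀ I ∈ B, (∃ i ≤ N, I.a = t i) ∧ (∃ j ≤ N, I.b = t j)

/-!
For `x ≤ y`, `[x, y] ⊆ I` just says that `x` lies in the left ray `[a, ∞)` or `(a, ∞)` of `I` and
`y` in its right ray. Fix `δ > 0` below half of every gap between critical values. For an interval
`J`, the points `x` (its left end if closed, else `a + δ`) and `x' < x` (`a - δ`, resp. `a`) lie in
the same left rays except those equal to the left ray of `J`; likewise `y < y'` on the right.
Hence the multiplicity of `J` is `i(x,y) - i(x',y) - i(x,y') + i(x',y')`.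
-/

namespace Multiset

theorem countP_and_add_countP_and {α : Type*} (p p' q q' : α → Prop)
    (hp : ∀ a, p' a → p a) (hq : ∀ a, q' a → q a) (s : Multiset α) :
    countP (fun a => p a ∧ q a) s + countP (fun a => p' a ∧ q' a) s =
      countP (fun a => (p a ∧ ¬p' a) ∧ (q a ∧ ¬q' a)) s +
        countP (fun a => p' a ∧ q a) s + countP (fun a => p a ∧ q' a) s := by
  induction s using Multiset.induction_on with
  | empty => simp
  | cons a s ih =>
    simp only [countP_cons]
    have hpa := hp a
    have hqa := hq a
    split_ifs <;> (try omega) <;> tauto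

end Multiset

namespace Bar

def leftSet (I : Bar) : Set ℝ := if I.leftClosed then Set.Ici I.a else Set.Ioi I.a

def rightSet (I : Bar) : Set ℝ := if I.rightOpen then Set.Iio I.b else Set.Iic I.b

theorem ext_iff_leftClosed_rightOpen {I J : Bar} :
    I = J ↔
      (I.leftClosed ↔ J.leftClosed) ∧ I.a = J.a ∧ (I.rightOpen ↔ J.rightOpen) ∧ I.b = J.b := by
  obtain ⟨k, a, b⟩ := I
  obtain ⟨k', a', b'⟩ := J
  cases k <;> cases k' <;> simp [leftClosed, rightOpen]

theorem toSet_eq_inter (I : Bar) : I.toSet = I.leftSet ∩ I.rightSet := by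
  rcases I with ⟨_ | _ | _ | _, a, b⟩ <;>
    simp [toSet, leftSet, rightSet, leftClosed, rightOpen, Set.Ici_inter_Iic, Set.Ici_inter_Iio,
      Set.Ioi_inter_Iic, Set.Ioi_inter_Iio]

theorem isUpperSet_leftSet (I : Bar) : IsUpperSet I.leftSet := by
  unfold leftSet; split_ifs
  exacts [isUpperSet_Ici _, isUpperSet_Ioi _]

theorem isLowerSet_rightSet (I : Bar) : IsLowerSet I.rightSet := by
  unfold rightSet; split_ifs
  exacts [isLowerSet_Iio _, isLowerSet_Iic _]

theorem Icc_subset_toSet_iff (I : Bar) {x y : ℝ} (hxy : x ≤ y) :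
    Set.Icc x y ⊆ I.toSet ↔ x ∈ I.leftSet ∧ y ∈ I.rightSet := by
  rw [toSet_eq_inter]
  refine ⟨fun h => ⟨(h (Set.left_mem_Icc.2 hxy)).1, (h (Set.right_mem_Icc.2 hxy)).2⟩, ?_⟩
  rintro ⟨hx, hy⟩ z ⟨hxz, hzy⟩
  exact ⟨I.isUpperSet_leftSet hxz hx, I.isLowerSet_rightSet hzy hy⟩

end Bar

theorem icount_eq_countP (M : Multiset Bar) {x y : ℝ} (hxy : x ≤ y) :
    icount M x y = countP (fun I => x ∈ I.leftSet ∧ y ∈ I.rightSet) M :=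
  countP_congr rfl fun I _ => propext (I.Icc_subset_toSet_iff hxy)

def GapsExceed (S : Set ℝ) (r : ℝ) : Prop := ∀ u ∈ S, ∀ v ∈ S, u < v → u + r < v

theorem Set.Finite.exists_pos_gapsExceed {S : Set ℝ} (hS : S.Finite) :
    ∃ δ > 0, GapsExceed S (2 * δ) := by
  have : ∀ᶠ δ in nhdsWithin (0 : ℝ) (Set.Ioi 0), GapsExceed S (2 * δ) := by
    simp only [GapsExceed, Filter.eventually_all_finite hS]
    intro u _ v _
    by_cases huv : u < v
    · filter_upwards [nhdsWithin_le_nhds (eventually_lt_nhds (by linarith : (0 : ℝ) < (v - u) / 2))]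
        with δ hδ _
      linarith
    · exact Filter.Eventually.of_forall fun _ h => absurd h huv
  obtain ⟨δ, hδS, hδ⟩ := (this.and self_mem_nhdsWithin).exists
  exact ⟨δ, hδ, hδS⟩

namespace Bar

def innerLeft (δ : ℝ) (J : Bar) : ℝ := if J.leftClosed then J.a else J.a + δ

def outerLeft (δ : ℝ) (J : Bar) : ℝ := if J.leftClosed then J.a - δ else J.a

def innerRight (δ : ℝ) (J : Bar) : ℝ := if J.rightOpen then J.b - δ else J.b

def outerRight (δ : ℝ) (J : Bar) : ℝ := if J.rightOpen then J.b else J.b + δ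

variable {S : Set ℝ} {δ : ℝ} {I J : Bar} {M : Multiset Bar}

theorem innerLeft_mem_and_outerLeft_notMem_iff (hS : GapsExceed S (2 * δ)) (hδ : 0 < δ)
    (hI : I.a ∈ S) (hJ : J.a ∈ S) :
    J.innerLeft δ ∈ I.leftSet ∧ J.outerLeft δ ∉ I.leftSet ↔
      (I.leftClosed ↔ J.leftClosed) ∧ I.a = J.a := by
  have := hS _ hI _ hJ
  have := hS _ hJ _ hI
  by_cases hIc : I.leftClosed <;> by_cases hJc : J.leftClosed <;>
    simp [leftSet, innerLeft, outerLeft, hIc, hJc] <;> grind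

theorem innerRight_mem_and_outerRight_notMem_iff (hS : GapsExceed S (2 * δ)) (hδ : 0 < δ)
    (hI : I.b ∈ S) (hJ : J.b ∈ S) :
    J.innerRight δ ∈ I.rightSet ∧ J.outerRight δ ∉ I.rightSet ↔
      (I.rightOpen ↔ J.rightOpen) ∧ I.b = J.b := by
  have := hS _ hI _ hJ
  have := hS _ hJ _ hI
  by_cases hIc : I.rightOpen <;> by_cases hJc : J.rightOpen <;>
    simp [rightSet, innerRight, outerRight, hIc, hJc] <;> grind

theorem outerLeft_le_innerLeft (hδ : 0 ≤ δ) (J : Bar) : J.outerLeft δ ≤ J.innerLeft δ := by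
  unfold outerLeft innerLeft; split_ifs <;> linarith

theorem innerRight_le_outerRight (hδ : 0 ≤ δ) (J : Bar) : J.innerRight δ ≤ J.outerRight δ := by
  unfold outerRight innerRight; split_ifs <;> linarith

theorem innerLeft_le_innerRight (hS : GapsExceed S (2 * δ)) (hδ : 0 < δ) (hJ : J.Valid)
    (ha : J.a ∈ S) (hb : J.b ∈ S) : J.innerLeft δ ≤ J.innerRight δ := by
  rcases J with ⟨_ | _ | _ | _, a, b⟩ <;>
    simp only [Valid, innerLeft, innerRight, leftClosed, rightOpen] at hJ ha hb ⊢
  · simpa using hJ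
  all_goals
    have := hS a ha b hb hJ
    simp only [reduceCtorEq, or_false, or_true, if_false, if_true]
    linarith

theorem count_add_icount_eq (hS : GapsExceed S (2 * δ)) (hδ : 0 < δ)
    (hM : ∀ I ∈ M, I.a ∈ S ∧ I.b ∈ S) (hJv : J.Valid) (hJ : J.a ∈ S ∧ J.b ∈ S) :
    count J M + icount M (J.outerLeft δ) (J.innerRight δ) +
        icount M (J.innerLeft δ) (J.outerRight δ) =
      icount M (J.innerLeft δ) (J.innerRight δ) + icount M (J.outerLeft δ) (J.outerRight δ) := by
  have hl := J.outerLeft_le_innerLeft hδ.le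
  have hlr := innerLeft_le_innerRight hS hδ hJv hJ.1 hJ.2
  have hr := J.innerRight_le_outerRight hδ.le
  have hcount : count J M = countP (fun I =>
      (J.innerLeft δ ∈ I.leftSet ∧ J.outerLeft δ ∉ I.leftSet) ∧
        (J.innerRight δ ∈ I.rightSet ∧ J.outerRight δ ∉ I.rightSet)) M :=
    countP_congr rfl fun I hI => by
      rw [innerLeft_mem_and_outerLeft_notMem_iff hS hδ (hM I hI).1 hJ.1,
        innerRight_mem_and_outerRight_notMem_iff hS hδ (hM I hI).2 hJ.2, @eq_comm _ J,
        ext_iff_leftClosed_rightOpen, and_assoc]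
  have hincl := countP_and_add_countP_and
    (fun I => J.innerLeft δ ∈ I.leftSet) (fun I => J.outerLeft δ ∈ I.leftSet)
    (fun I => J.innerRight δ ∈ I.rightSet) (fun I => J.outerRight δ ∈ I.rightSet)
    (fun I => I.isUpperSet_leftSet hl) (fun I => I.isLowerSet_rightSet hr) M
  rw [icount_eq_countP M hlr, icount_eq_countP M (hl.trans hlr), icount_eq_countP M (hlr.trans hr),
    icount_eq_countP M ((hl.trans hlr).trans hr), hcount]
  omega

end Bar

theorem endpointsIn.mem_image {M : Multiset Bar} {t : ℕ → ℝ} {N : ℕ} (hM : endpointsIn M t N) :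
    ∀ I ∈ M, I.a ∈ t '' Set.Iic N ∧ I.b ∈ t '' Set.Iic N := fun I hI =>
  ⟨(hM I hI).1.imp fun _ h => ⟨h.1, h.2.symm⟩, (hM I hI).2.imp fun _ h => ⟨h.1, h.2.symm⟩⟩

theorem Multiset.eq_of_icount_eq {S : Set ℝ} (hS : S.Finite) {B B' : Multiset Bar}
    (hBv : ∀ I ∈ B, I.Valid) (hB'v : ∀ I ∈ B', I.Valid)
    (hB : ∀ I ∈ B, I.a ∈ S ∧ I.b ∈ S) (hB' : ∀ I ∈ B', I.a ∈ S ∧ I.b ∈ S)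
    (h : ∀ s s' : ℝ, s ≤ s' → icount B s s' = icount B' s s') : B = B' := by
  obtain ⟨δ, hδ, hsep⟩ := hS.exists_pos_gapsExceed
  ext J
  by_cases hJ : J ∈ B ∨ J ∈ B'
  · have hJv : J.Valid := hJ.elim (hBv J) (hB'v J)
    have hJS : J.a ∈ S ∧ J.b ∈ S := hJ.elim (hB J) (hB' J)
    have hl := J.outerLeft_le_innerLeft hδ.le
    have hlr := Bar.innerLeft_le_innerRight hsep hδ hJv hJS.1 hJS.2
    have hr := J.innerRight_le_outerRight hδ.le
    have hcount := Bar.count_add_icount_eq hsep hδ hB hJv hJS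
    rw [h _ _ hlr, h _ _ (hl.trans hlr), h _ _ (hlr.trans hr), h _ _ ((hl.trans hlr).trans hr),
      ← Bar.count_add_icount_eq hsep hδ hB' hJv hJS] at hcount
    omega
  · rw [not_or] at hJ
    rw [count_eq_zero_of_notMem hJ.1, count_eq_zero_of_notMem hJ.2]

theorem stmt5_general (N : ℕ) (t : ℕ → ℝ)
    (B B' : Multiset Bar)
    (hBv : ∀ I ∈ B, I.Valid) (hB'v : ∀ I ∈ B', I.Valid)
    (hB : endpointsIn B t N) (hB' : endpointsIn B' t N)
    (h : ∀ s s' : ℝ, s ≤ s' → icount B s s' = icount B' s s') :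
    B = B' := by
  exact Multiset.eq_of_icount_eq ((Set.finite_Iic N).image t) hBv hB'v hB.mem_image hB'.mem_image h

theorem stmt5 (N : ℕ) (t : ℕ → ℝ) (ht : StrictMono t)
    (B B' : Multiset Bar)
    (hBv : ∀ I ∈ B, I.Valid) (hB'v : ∀ I ∈ B', I.Valid)
    (hB : endpointsIn B t N) (hB' : endpointsIn B' t N)
    (h : ∀ s s' : ℝ, s ≤ s' → icount B s s' = icount B' s s') :
    B = B' :=
  stmt5_general N t B B' hBv hB'v hB hB' h
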